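/- arXiv:1106.1255 — 2 statements merged into one kernel-verified Lean document; each statement's English description precedes it below -/
import Mathlib

section
/- Let G be connected non-bipartite and S ⊆ V(G × K₂) with |S| < min{2κ(G), b(G)}. Then G × K₂ − S is connected. Consequently κ(G × K₂) ≥ min{2κ(G), b(G)}. -/
open SimpleGraph

universe u v

/-- Kronecker (direct / tensor) product of two simple graphs. -/
def SimpleGraph.tensor {V : Type u} {W : Type v} (G : SimpleGraph V) (H : SimpleGraph W) :
    SimpleGraph (V × W) where
  Adj p q := G.Adj p.1 q.1 ∧ H.Adj p.2 q.2
  symm := ⟨fun _ _ h => ⟨h.1.symm, h.2.symm⟩⟩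
  loopless := ⟨fun _ h => G.loopless.irrefl _ h.1⟩

/-- `G × K₂`, realized on `V × Bool` (where `false` plays the role of `a` and `true` of `b`):
`(u,x)` is adjacent to `(v,y)` iff `uv ∈ E(G)` and `x ≠ y`. -/
def timesK2 {V : Type u} (G : SimpleGraph V) : SimpleGraph (V × Bool) :=
  G.tensor ⊤

/-- `C` is (the vertex set of) a connected component of the graph `H`. -/
def IsComp {α : Type u} (H : SimpleGraph α) (C : Set α) : Prop :=
  ∃ K : H.ConnectedComponent, C = K.supp

/-- `C ⊆ V` is (the vertex set of) a connected component of the induced subgraph `G[s]`. -/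
def IsCompOf {V : Type u} (G : SimpleGraph V) (s C : Set V) : Prop :=
  ∃ K : (G.induce s).ConnectedComponent, C = Subtype.val '' K.supp

/-- `(X, Y)` is a b-pair of `G`: `X` and `Y` are disjoint, `V(G) - (X ∪ Y)` is nonempty,
`G - (X ∪ Y)` has a bipartite component `C`, and `G[V(C) ∪ {x}]` is bipartite
for each `x ∈ X`.  (Bipartite = 2-colorable.) -/
def IsBPair {V : Type u} (G : SimpleGraph V) (X Y : Set V) : Prop :=
  Disjoint X Y ∧ ((X ∪ Y)ᶜ : Set V).Nonempty ∧
    ∃ C : Set V, IsCompOf G ((X ∪ Y)ᶜ) C ∧ (G.induce C).Colorable 2 ∧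
      ∀ x ∈ X, (G.induce (C ∪ {x})).Colorable 2

/-- `b(G) = min{|X| + 2|Y| : (X,Y) is a b-pair of G}`. -/
noncomputable def bInv {V : Type u} (G : SimpleGraph V) : ℕ :=
  sInf {n | ∃ X Y : Set V, IsBPair G X Y ∧ n = X.ncard + 2 * Y.ncard}

/-- `S` is a separating set of `G`: removing `S` leaves a disconnected graph,
or a graph with at most one vertex. -/
def IsSeparating {V : Type u} (G : SimpleGraph V) (S : Set V) : Prop :=
  ¬ (G.induce Sᶜ).Connected ∨ (Sᶜ : Set V).Subsingleton

/-- The vertex connectivity `κ(G)`: the fewest number of vertices whose removal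
disconnects `G` or leaves at most a single vertex. -/
noncomputable def kappa {V : Type u} (G : SimpleGraph V) : ℕ :=
  sInf {n | ∃ S : Set V, IsSeparating G S ∧ n = S.ncard}

/-- The quotient-like graph `G*` whose vertices are the nonempty classes
`S'_u = ({u} × {a,b}) − S` (indexed by `u ∈ V(G)`), with `S'_u ~ S'_v` iff
`G × K₂ − S` has an edge with one end in `S'_u` and the other in `S'_v`. -/
def starGraph {V : Type u} (G : SimpleGraph V) (S : Set (V × Bool)) : SimpleGraph V where
  Adj u v := u ≠ v ∧ ∃ x y : Bool, (u, x) ∉ S ∧ (v, y) ∉ S ∧ (timesK2 G).Adj (u, x) (v, y)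
  symm := ⟨by
    rintro u v ⟨h, x, y, hx, hy, hadj⟩
    exact ⟨h.symm, y, x, hy, hx, hadj.symm⟩⟩
  loopless := ⟨fun u h => h.1 rfl⟩

/-!
Let `Y` be the vertices of `G` with both copies in `S` and `Z` those with exactly one, so that
`2|Y| + |Z| ≤ |S|`. Suppose `G × K₂ − S` is disconnected.

* If the two copies of a vertex `u` untouched by `S` lie in different components, let `K` be the
  component of `u` among untouched vertices. Colouring `v ∈ K` by which of its copies lies in the
  component of `(u, a)` is proper, and every vertex of `∂K − Y` lies in `Z` and sees only one
  colour of `K` (its surviving copy is adjacent to a copy of each of its neighbours in `K`). So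
  `(∂K − Y, Y)` is a b-pair and `b(G) ≤ |S|`.
* If a surviving copy of `u` is connected to no untouched vertex, no neighbour of `u` is untouched
  and `(N(u) − Y, Y)` is a b-pair with bipartite component `{u}`.
* Otherwise two components `A ≠ B` each contain both copies of an untouched vertex. The outer
  boundary of the set of vertices with both copies in `A` separates `G` and lies in `Y` together
  with the vertices of `Z` whose surviving copy is in `A`; likewise for `B`, and these two parts
  of `Z` are disjoint. Hence `2κ(G) ≤ 2|Y| + |Z| ≤ |S|`.
-/

namespace SimpleGraph

variable {α : Type*} {H : SimpleGraph α}

theorem Reachable.mem_of_adj_closed {s : Set α} (hs : ∀ ⦃a b⦄, H.Adj a b → a ∈ s → b ∈ s)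
    {a b : α} (h : H.Reachable a b) (ha : a ∈ s) : b ∈ s := by
  obtain ⟨p⟩ := h
  induction p with
  | nil => exact ha
  | cons hadj _ ih => exact ih (hs hadj ha)

theorem spanningCoe_induce_adj {s : Set α} {a b : α} :
    (H.induce s).spanningCoe.Adj a b ↔ H.Adj a b ∧ a ∈ s ∧ b ∈ s := by
  constructor
  · rintro ⟨-, a', b', hab, rfl, rfl⟩
    exact ⟨hab, a'.2, b'.2⟩
  · rintro ⟨hab, ha, hb⟩
    exact ⟨hab.ne, ⟨a, ha⟩, ⟨b, hb⟩, hab, rfl, rfl⟩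

theorem connected_induce_of_reachable_spanningCoe {s : Set α} (hs : s.Nonempty)
    (h : ∀ a ∈ s, ∀ b ∈ s, (H.induce s).spanningCoe.Reachable a b) : (H.induce s).Connected := by
  have : Nonempty s := hs.to_subtype
  refine ⟨fun a b => ?_⟩
  have hclosed : ∀ ⦃x y⦄, (H.induce s).spanningCoe.Adj x y →
      x ∈ {x | ∃ hx : x ∈ s, (H.induce s).Reachable a ⟨x, hx⟩} →
      y ∈ {x | ∃ hx : x ∈ s, (H.induce s).Reachable a ⟨x, hx⟩} := by
    rintro x y hxy ⟨hx, hax⟩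
    obtain ⟨hxy, -, hy⟩ := spanningCoe_induce_adj.mp hxy
    exact ⟨hy, hax.trans (Adj.reachable (by exact hxy))⟩
  obtain ⟨_, hab⟩ := (h a a.2 b b.2).mem_of_adj_closed hclosed ⟨a.2, Reachable.rfl⟩
  exact hab

end SimpleGraph

section Graph

variable {V : Type u} {G : SimpleGraph V}

variable (G) in
def vertexBoundary (K : Set V) : Set V := {w | w ∉ K ∧ ∃ u ∈ K, G.Adj u w}

theorem kappa_le_ncard {T : Set V} (h : IsSeparating G T) : kappa G ≤ T.ncard :=
  Nat.sInf_le ⟨T, h, rfl⟩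

theorem bInv_le_ncard {X Y : Set V} (h : IsBPair G X Y) : bInv G ≤ X.ncard + 2 * Y.ncard :=
  Nat.sInf_le ⟨X, Y, h, rfl⟩

theorem kappa_le_card_sub_one [Finite V] : kappa G ≤ Nat.card V - 1 := by
  rcases isEmpty_or_nonempty V with hV | ⟨⟨v⟩⟩
  · simpa using kappa_le_ncard (G := G) (T := ∅) (Or.inr (by simp [Set.Subsingleton]))
  · have hk := kappa_le_ncard (G := G) (T := {v}ᶜ) (Or.inr (by simp))
    have hc := Set.ncard_add_ncard_compl ({v} : Set V)
    rw [Set.ncard_singleton] at hc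
    omega

theorem le_kappa_of_forall_connected [Finite V] {m : ℕ} (hm : m ≤ Nat.card V - 1)
    (h : ∀ S : Set V, S.ncard < m → (G.induce Sᶜ).Connected) : m ≤ kappa G := by
  refine le_csInf ⟨_, Set.univ, Or.inr (by simp), rfl⟩ ?_
  rintro n ⟨T, hT | hT, rfl⟩ <;> by_contra! hlt
  · exact hT (h T hlt)
  · have hc := Set.ncard_add_ncard_compl T
    have h1 := Set.ncard_le_one_iff_subsingleton.mpr hT
    omega

theorem isCompOf_of_connected {s K : Set V} (hKs : K ⊆ s) (hK : (G.induce K).Connected)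
    (hclosed : ∀ u ∈ K, ∀ w ∈ s, G.Adj u w → w ∈ K) : IsCompOf G s K := by
  obtain ⟨v, hv⟩ := hK.nonempty
  refine ⟨(G.induce s).connectedComponentMk ⟨v, hKs hv⟩, Set.ext fun u => ⟨fun hu => ?_, ?_⟩⟩
  · refine ⟨⟨u, hKs hu⟩, ?_, rfl⟩
    exact ConnectedComponent.sound
      ((hK.preconnected ⟨u, hu⟩ ⟨v, hv⟩).map (G.induceHomOfLE hKs).toHom)
  · rintro ⟨u', hu', rfl⟩
    refine (ConnectedComponent.exact hu').symm.mem_of_adj_closed (s := {x : s | x.1 ∈ K}) ?_ hv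
    exact fun a b hab ha => hclosed _ ha _ b.2 hab

theorem colorable_two_induce_of_bool {s : Set V} (c : V → Bool)
    (hc : ∀ u ∈ s, ∀ v ∈ s, G.Adj u v → c u ≠ c v) : (G.induce s).Colorable 2 :=
  (Coloring.mk (fun v : s => c v) fun {u v} huv => hc u u.2 v v.2 huv).colorable

theorem isSeparating_vertexBoundary {W : Set V} {u w : V} (hu : u ∈ W) (hw : w ∉ W)
    (hw' : w ∉ vertexBoundary G W) : IsSeparating G (vertexBoundary G W) := by
  refine Or.inl fun hconn => hw ?_
  refine (hconn.preconnected ⟨u, fun h => h.1 hu⟩ ⟨w, hw'⟩).mem_of_adj_closed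
    (s := {x : ↥(vertexBoundary G W)ᶜ | x.1 ∈ W}) (fun a b hab ha => ?_) hu
  by_contra hb
  exact b.2 ⟨hb, a, ha, hab⟩

theorem isBPair_vertexBoundary_diff {K Y : Set V} (hK : (G.induce K).Connected)
    (hKY : Disjoint K Y) (c : V → Bool) (hc : ∀ u ∈ K, ∀ v ∈ K, G.Adj u v → c u ≠ c v)
    (hX : ∀ x ∈ vertexBoundary G K \ Y, ∀ u ∈ K, ∀ v ∈ K, G.Adj u x → G.Adj v x → c u = c v) :
    IsBPair G (vertexBoundary G K \ Y) Y := by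
  have hKs : K ⊆ (vertexBoundary G K \ Y ∪ Y)ᶜ := by
    rintro u hu (h | h)
    · exact h.1.1 hu
    · exact Set.disjoint_left.mp hKY hu h
  obtain ⟨v, hv⟩ := hK.nonempty
  refine ⟨Set.disjoint_sdiff_left, ⟨v, hKs hv⟩, K, isCompOf_of_connected hKs hK ?_,
    colorable_two_induce_of_bool c hc, fun x hx => ?_⟩
  · intro u hu w hw huw
    by_contra hwK
    exact hw (Or.inl ⟨⟨hwK, u, hu, huw⟩, fun hY => hw (Or.inr hY)⟩)
  · classical
    obtain ⟨hxK, u₁, hu₁, hu₁x⟩ := hx.1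
    have hne : ∀ u ∈ K, u ≠ x := fun u hu h => hxK (h ▸ hu)
    refine colorable_two_induce_of_bool (Function.update c x (!c u₁)) ?_
    rintro u (hu | rfl) w (hw | rfl) huw
    · simpa [hne u hu, hne w hw] using hc u hu w hw huw
    · simp [hne u hu, hX _ hx u hu u₁ hu₁ huw hu₁x]
    · simp [hne w hw, hX _ hx w hw u₁ hu₁ huw.symm hu₁x]
    · exact (huw.ne rfl).elim

variable (G) in
def componentIn (U : Set V) (u : V) : Set V :=
  ((G.induce U).spanningCoe.connectedComponentMk u).supp

variable {U : Set V} {u v w : V}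

theorem componentIn_induction {P : V → Prop} (hu : P u)
    (hstep : ∀ v w, G.Adj v w → v ∈ U → w ∈ U → P v → P w) (hv : v ∈ componentIn G U u) :
    P v := by
  refine (ConnectedComponent.exact hv).symm.mem_of_adj_closed (s := {x | P x}) ?_ hu
  intro a b hab ha
  obtain ⟨hab, haU, hbU⟩ := spanningCoe_induce_adj.mp hab
  exact hstep a b hab haU hbU ha

theorem componentIn_subset (hu : u ∈ U) : componentIn G U u ⊆ U :=
  fun _ => componentIn_induction hu fun _ _ _ _ hw _ => hw

theorem mem_componentIn_of_adj (hu : u ∈ U) (hv : v ∈ componentIn G U u) (hvw : G.Adj v w)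
    (hw : w ∈ U) : w ∈ componentIn G U u :=
  (ConnectedComponent.connectedComponentMk_eq_of_adj
    (spanningCoe_induce_adj.mpr ⟨hvw, componentIn_subset hu hv, hw⟩)).symm.trans hv

theorem connected_induce_componentIn : (G.induce (componentIn G U u)).Connected :=
  (ConnectedComponent.connected_toSimpleGraph _).mono
    (SimpleGraph.comap_monotone _ (spanningCoe_induce_le G U))

end Graph

section TimesK2

variable {V : Type u} {G : SimpleGraph V} {S : Set (V × Bool)}

def Intact (S : Set (V × Bool)) (u : V) : Prop := ∀ b, (u, b) ∉ S

def doublyHit (S : Set (V × Bool)) : Set V := {u | ∀ b, (u, b) ∈ S}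

def singlyHit (S : Set (V × Bool)) : Set V := {u | ∃ b, (u, b) ∈ S ∧ (u, !b) ∉ S}

theorem mem_singlyHit_of_not_intact {u : V} (h : ¬ Intact S u) (hY : u ∉ doublyHit S) :
    u ∈ singlyHit S := by
  simp only [Intact, doublyHit, Set.mem_ofPred_eq, not_forall, not_not] at h hY
  obtain ⟨b, hb⟩ := h
  obtain ⟨c, hc⟩ := hY
  refine ⟨b, hb, ?_⟩
  cases b <;> cases c <;> simp_all

theorem eq_of_mem_singlyHit {u : V} (hu : u ∈ singlyHit S) {b c : Bool} (hb : (u, b) ∉ S)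
    (hc : (u, c) ∉ S) : b = c := by
  obtain ⟨d, hd, -⟩ := hu
  cases b <;> cases c <;> cases d <;> simp_all

theorem two_mul_ncard_doublyHit_add_ncard_le [Finite V] {X : Set V} (hX : X ⊆ singlyHit S) :
    2 * (doublyHit S).ncard + X.ncard ≤ S.ncard := by
  have hdisj : Disjoint (doublyHit S ×ˢ Set.univ) (S ∩ Prod.fst ⁻¹' X) := by
    rw [Set.disjoint_left]
    rintro ⟨u, b⟩ ⟨hY, -⟩ ⟨-, hu⟩
    obtain ⟨c, -, hc⟩ := hX hu
    exact hc (hY _)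
  have hsub : doublyHit S ×ˢ Set.univ ∪ S ∩ Prod.fst ⁻¹' X ⊆ S :=
    Set.union_subset (fun p hp => hp.1 p.2) Set.inter_subset_left
  have hproj : X ⊆ Prod.fst '' (S ∩ Prod.fst ⁻¹' X) := fun x hx =>
    let ⟨b, hb, _⟩ := hX hx
    ⟨(x, b), ⟨hb, hx⟩, rfl⟩
  calc 2 * (doublyHit S).ncard + X.ncard
      ≤ (doublyHit S ×ˢ Set.univ).ncard + (S ∩ Prod.fst ⁻¹' X).ncard := by
        rw [Set.ncard_prod, Set.ncard_univ, Nat.card_eq_fintype_card, Fintype.card_bool, mul_comm]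
        gcongr
        exact (Set.ncard_le_ncard hproj).trans (Set.ncard_image_le (Set.toFinite _))
    _ = (doublyHit S ×ˢ Set.univ ∪ S ∩ Prod.fst ⁻¹' X).ncard := (Set.ncard_union_eq hdisj).symm
    _ ≤ S.ncard := Set.ncard_le_ncard hsub

theorem bInv_le_ncard_of_isBPair [Finite V] {X : Set V} (h : IsBPair G X (doublyHit S))
    (hX : X ⊆ singlyHit S) : bInv G ≤ S.ncard := by
  have := two_mul_ncard_doublyHit_add_ncard_le hX
  have := bInv_le_ncard h
  omega

theorem bInv_le_ncard_of_forall_adj_not_intact [Finite V] {u : V} (hu : u ∉ doublyHit S)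
    (hN : ∀ w, G.Adj u w → ¬ Intact S w) : bInv G ≤ S.ncard := by
  have : Nonempty ({u} : Set V) := ⟨⟨u, rfl⟩⟩
  have hK : (G.induce {u}).Connected := ⟨Preconnected.of_subsingleton⟩
  refine bInv_le_ncard_of_isBPair (isBPair_vertexBoundary_diff hK
    (Set.disjoint_singleton_left.mpr hu) (fun _ => false) ?_ ?_) ?_
  · rintro _ rfl _ rfl h
    exact (h.ne rfl).elim
  · rintro x - _ rfl _ rfl - -
    rfl
  · rintro x ⟨⟨-, _, rfl, hux⟩, hxY⟩
    exact mem_singlyHit_of_not_intact (hN x hux) hxY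

-- `G × K₂ − S` as a spanning subgraph of `G × K₂`: the vertices of `S` stay, isolated, so that
-- its components are indexed by all of `V × Bool`.
variable (G S) in
def timesK2Minus : SimpleGraph (V × Bool) := ((timesK2 G).induce Sᶜ).spanningCoe

theorem timesK2Minus_mk_eq_of_adj {u v : V} {b : Bool} (huv : G.Adj u v) (hu : (u, b) ∉ S)
    (hv : (v, !b) ∉ S) :
    (timesK2Minus G S).connectedComponentMk (u, b) =
      (timesK2Minus G S).connectedComponentMk (v, !b) :=
  ConnectedComponent.connectedComponentMk_eq_of_adj
    (spanningCoe_induce_adj.mpr ⟨⟨huv, by simp⟩, hu, hv⟩)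

theorem bInv_le_ncard_of_copies_disconnected [Finite V] {u₀ : V} (hu₀ : Intact S u₀)
    (hsplit : (timesK2Minus G S).connectedComponentMk (u₀, false) ≠
      (timesK2Minus G S).connectedComponentMk (u₀, true)) :
    bInv G ≤ S.ncard := by
  classical
  have hf : ∀ {u v : V} {b : Bool}, G.Adj u v → (u, b) ∉ S → (v, !b) ∉ S →
      (timesK2Minus G S).connectedComponentMk (u, b) =
        (timesK2Minus G S).connectedComponentMk (v, !b) := timesK2Minus_mk_eq_of_adj
  generalize (timesK2Minus G S).connectedComponentMk = f at hsplit hf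
  set K := componentIn G {v | Intact S v} u₀
  have hKint : ∀ v ∈ K, Intact S v := fun _ hv => componentIn_subset hu₀ hv
  have hsides : ∀ v ∈ K, ∃ b, f (v, b) = f (u₀, false) ∧ f (v, !b) = f (u₀, true) := by
    refine fun v => componentIn_induction
      (P := fun v => ∃ b, f (v, b) = f (u₀, false) ∧ f (v, !b) = f (u₀, true)) ⟨false, rfl, rfl⟩ ?_
    rintro v w hvw hv hw ⟨b, hA, hB⟩
    refine ⟨!b, ?_, ?_⟩
    · rw [← hA, hf hvw (hv b) (hw _)]
    · rw [← hB, hf hvw (hv (!b)) (hw _), Bool.not_not]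
  let c : V → Bool := fun v => decide (f (v, true) = f (u₀, false))
  have hc : ∀ v ∈ K, ∀ b, f (v, b) = f (u₀, false) ↔ c v = b := by
    intro v hv b
    obtain ⟨b', hA, hB⟩ := hsides v hv
    cases b <;> cases b' <;> simp_all [c, Ne.symm hsplit]
  have hbdry : ∀ x ∈ vertexBoundary G K, ¬ Intact S x := fun x ⟨hxK, u, hu, hux⟩ hx =>
    hxK (mem_componentIn_of_adj hu₀ hu hux hx)
  refine bInv_le_ncard_of_isBPair (isBPair_vertexBoundary_diff connected_induce_componentIn
    (Set.disjoint_left.mpr fun v hv hY => hKint v hv false (hY false)) c ?_ ?_)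
    fun x hx => mem_singlyHit_of_not_intact (hbdry x hx.1) hx.2
  · intro u hu v hv huv hcuv
    have h := (hc u hu (c u)).mpr rfl
    rw [hf huv (hKint u hu _) (hKint v hv _), hc v hv, hcuv] at h
    cases c v <;> simp at h
  · intro x ⟨hx, hxY⟩ u hu v hv hux hvx
    obtain ⟨d, -, hd⟩ := mem_singlyHit_of_not_intact (hbdry x hx) hxY
    have hu' := hc u hu d
    have hv' := hc v hv d
    rw [hf hux (hKint u hu d) hd] at hu'
    rw [hf hvx (hKint v hv d) hd] at hv'
    cases hcu : c u <;> cases hcv : c v <;> cases d <;> simp_all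

variable (S) in
def singlyHitIn (A : (timesK2Minus G S).ConnectedComponent) : Set V :=
  {w | w ∈ singlyHit S ∧ ∃ b, (w, b) ∉ S ∧ (timesK2Minus G S).connectedComponentMk (w, b) = A}

theorem disjoint_singlyHitIn {A B : (timesK2Minus G S).ConnectedComponent} (hAB : A ≠ B) :
    Disjoint (singlyHitIn S A) (singlyHitIn S B) := by
  rw [Set.disjoint_left]
  rintro w ⟨hw, b, hb, rfl⟩ ⟨-, c, hc, rfl⟩
  exact hAB (by rw [eq_of_mem_singlyHit hw hb hc])

theorem kappa_le_ncard_doublyHit_add_ncard_singlyHitIn [Finite V]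
    {A : (timesK2Minus G S).ConnectedComponent} {u w : V} (hu : Intact S u)
    (huA : ∀ b, (timesK2Minus G S).connectedComponentMk (u, b) = A) (hw : Intact S w)
    (hwA : (timesK2Minus G S).connectedComponentMk (w, false) ≠ A) :
    kappa G ≤ (doublyHit S).ncard + (singlyHitIn S A).ncard := by
  set W := {v | Intact S v ∧ ∀ b, (timesK2Minus G S).connectedComponentMk (v, b) = A}
  have hT : vertexBoundary G W ⊆ doublyHit S ∪ singlyHitIn S A := by
    rintro x ⟨hxW, v, ⟨hv, hvA⟩, hvx⟩
    by_cases hY : x ∈ doublyHit S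
    · exact Or.inl hY
    by_cases hx : Intact S x
    · refine absurd ⟨hx, fun b => ?_⟩ hxW
      rw [timesK2Minus_mk_eq_of_adj hvx.symm (hx b) (hv _), hvA]
    · have hZ := mem_singlyHit_of_not_intact hx hY
      obtain ⟨d, -, hd⟩ := id hZ
      exact Or.inr ⟨hZ, !d, hd, by rw [← timesK2Minus_mk_eq_of_adj hvx (hv d) hd, hvA]⟩
  have hwT : w ∉ vertexBoundary G W := fun h => (hT h).elim (fun hY => hw false (hY false))
    fun ⟨⟨b, hb, _⟩, _⟩ => hw b hb
  calc kappa G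
      ≤ (vertexBoundary G W).ncard :=
        kappa_le_ncard (isSeparating_vertexBoundary ⟨hu, huA⟩ (fun h => hwA (h.2 false)) hwT)
    _ ≤ (doublyHit S ∪ singlyHitIn S A).ncard := Set.ncard_le_ncard hT
    _ ≤ (doublyHit S).ncard + (singlyHitIn S A).ncard := Set.ncard_union_le _ _

theorem two_mul_kappa_le_ncard [Finite V] {u w : V} (hu : Intact S u) (hw : Intact S w)
    (hfu : (timesK2Minus G S).connectedComponentMk (u, false) =
      (timesK2Minus G S).connectedComponentMk (u, true))
    (hfw : (timesK2Minus G S).connectedComponentMk (w, false) =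
      (timesK2Minus G S).connectedComponentMk (w, true))
    (huw : (timesK2Minus G S).connectedComponentMk (u, false) ≠
      (timesK2Minus G S).connectedComponentMk (w, false)) :
    2 * kappa G ≤ S.ncard := by
  have hu' := kappa_le_ncard_doublyHit_add_ncard_singlyHitIn hu
    (by rintro (_ | _); exacts [rfl, hfu.symm]) hw (Ne.symm huw)
  have hw' := kappa_le_ncard_doublyHit_add_ncard_singlyHitIn hw
    (by rintro (_ | _); exacts [rfl, hfw.symm]) hu huw
  have hcount := two_mul_ncard_doublyHit_add_ncard_le
    (X := singlyHitIn S ((timesK2Minus G S).connectedComponentMk (u, false)) ∪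
      singlyHitIn S ((timesK2Minus G S).connectedComponentMk (w, false)))
    (Set.union_subset (fun _ hx => hx.1) (fun _ hx => hx.1))
  rw [Set.ncard_union_eq (disjoint_singlyHitIn huw)] at hcount
  omega

theorem connected_timesK2_induce_compl [Finite V] (h2k : S.ncard < 2 * kappa G)
    (hb : S.ncard < bInv G) : ((timesK2 G).induce Sᶜ).Connected := by
  have hne : Sᶜ.Nonempty := by
    by_contra h
    rw [Set.not_nonempty_iff_eq_empty, Set.compl_empty_iff] at h
    have := kappa_le_card_sub_one (G := G)
    rw [h, Set.ncard_univ, Nat.card_prod, Nat.card_eq_fintype_card (α := Bool),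
      Fintype.card_bool] at h2k
    omega
  have hfib : ∀ u, Intact S u → (timesK2Minus G S).connectedComponentMk (u, false) =
      (timesK2Minus G S).connectedComponentMk (u, true) := fun u hu => by
    by_contra h
    exact (bInv_le_ncard_of_copies_disconnected hu h).not_gt hb
  have hreach : ∀ p ∉ S, ∃ u, Intact S u ∧ (timesK2Minus G S).connectedComponentMk p =
      (timesK2Minus G S).connectedComponentMk (u, false) := by
    rintro ⟨u, x⟩ hp
    by_contra! h
    refine (bInv_le_ncard_of_forall_adj_not_intact (u := u) (fun hY => hp (hY x)) ?_).not_gt hb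
    intro w huw hw
    refine h w hw ((timesK2Minus_mk_eq_of_adj huw hp (hw _)).trans ?_)
    cases x
    exacts [(hfib w hw).symm, rfl]
  refine connected_induce_of_reachable_spanningCoe hne fun p hp q hq => ?_
  rw [← ConnectedComponent.eq]
  by_contra hpq
  obtain ⟨u, hu, hpu⟩ := hreach p hp
  obtain ⟨w, hw, hqw⟩ := hreach q hq
  have := two_mul_kappa_le_ncard hu hw (hfib u hu) (hfib w hw)
    fun h => hpq (hpu.trans (h.trans hqw.symm))
  omega

end TimesK2

theorem stmt_14_general {V : Type u} [Fintype V] (G : SimpleGraph V) :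
    (∀ S : Set (V × Bool), S.ncard < min (2 * kappa G) (bInv G) →
      ((timesK2 G).induce Sᶜ).Connected) ∧
    min (2 * kappa G) (bInv G) ≤ kappa (timesK2 G) := by
  have hconnected : ∀ S : Set (V × Bool), S.ncard < min (2 * kappa G) (bInv G) →
      ((timesK2 G).induce Sᶜ).Connected := fun S hS =>
    connected_timesK2_induce_compl (hS.trans_le (min_le_left _ _))
      (hS.trans_le (min_le_right _ _))
  refine ⟨hconnected, le_kappa_of_forall_connected ?_ hconnected⟩
  have := kappa_le_card_sub_one (G := G)
  rw [Nat.card_prod, Nat.card_eq_fintype_card (α := Bool), Fintype.card_bool]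
  omega

/-- If `G` is connected and non-bipartite and `|S| < min{2κ(G), b(G)}`, then
`G × K₂ − S` is connected; consequently `κ(G × K₂) ≥ min{2κ(G), b(G)}`. -/
theorem stmt_14 {V : Type u} [Fintype V] (G : SimpleGraph V)
    (hconn : G.Connected) (hnbip : ¬ G.Colorable 2) :
    (∀ S : Set (V × Bool), S.ncard < min (2 * kappa G) (bInv G) →
      ((timesK2 G).induce Sᶜ).Connected) ∧
    min (2 * kappa G) (bInv G) ≤ kappa (timesK2 G) :=
  stmt_14_general G
end

section
/- Let (X, Y) be a b-pair of G witnessed by a bipartite component C of G − (X ∪ Y) with bipartition (P, Q). Define S' = {(x, b) : x ∈ X has a neighbor in P} ∪ {(x, a) : x ∈ X has no neighbor in P} and S'' = Y × {a, b}. Then the component C₁ of C × K₂ with bipartition (P × {a}, Q × {b}) is a connected component of G × K₂ − (S' ∪ S''); in particular, S' ∪ S'' is a separating set of G × K₂ of size |X| + 2|Y| provided G × K₂ − (S' ∪ S'') has another vertex. -/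
open SimpleGraph

universe u v

/-!
Colour the bipartite component `C` by its sides; `u ↦ (u, side u)` embeds `C` as the sheet
`C₁ = P × {a} ∪ Q × {b}` of the double cover `G × K₂`, so `C₁` is connected. An edge leaving
`C₁` ends at some `(w, γ)` with `w ∈ X ∪ Y`. Vertices over `Y` are all deleted. From `(p, a)`,
`p ∈ P`, the edge reaches `(x, b)` with `x ∈ X` adjacent to `p`, which is deleted. From `(q, b)`,
`q ∈ Q`, it reaches `(x, a)`, deleted unless `x` has a neighbour `p ∈ P`; but then a `p`–`q`
path in `C`, of odd length since it changes sides, closes an odd cycle through `x`, against the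
bipartiteness of `C + x`.
-/

open Set

section Components

variable {α : Type*} {H : SimpleGraph α}

namespace SimpleGraph

theorem Reachable.mem_of_adj_closed_s19 {A : Set α} (hA : ∀ u v, u ∈ A → H.Adj u v → v ∈ A)
    {u v : α} (h : H.Reachable u v) (hu : u ∈ A) : v ∈ A := by
  obtain ⟨w⟩ := h
  induction w with
  | nil => exact hu
  | cons huv _ ih => exact ih (hA _ _ hu huv)

theorem Walk.even_length_of_adj_of_adj (hH : H.Colorable 2) {x p q : α} (hp : H.Adj x p)
    (hq : H.Adj x q) (w : H.Walk p q) : Even w.length := by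
  have := two_colorable_iff_forall_loop_even.mp hH x (.cons hp (w.concat hq.symm))
  simpa [Walk.length_concat, Nat.even_add_one] using this

end SimpleGraph

theorem isComp_induce_of_connected {T A : Set α} (hAT : A ⊆ T) (hconn : (H.induce A).Connected)
    (hclosed : ∀ u v, u ∈ A → v ∈ T → H.Adj u v → v ∈ A) :
    IsComp (H.induce T) (Subtype.val ⁻¹' A) := by
  obtain ⟨a, ha⟩ := hconn.nonempty
  refine ⟨(H.induce T).connectedComponentMk ⟨a, hAT ha⟩,
    Set.ext fun v => ⟨fun hv => ?_, fun hv => ?_⟩⟩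
  · exact ConnectedComponent.sound
      ((hconn.preconnected ⟨v, hv⟩ ⟨a, ha⟩).map (induceHomOfLE H hAT).toHom)
  · exact (ConnectedComponent.exact hv).symm.mem_of_adj_closed_s19 (A := Subtype.val ⁻¹' A)
      (fun u w hu huw => hclosed u w hu w.2 huw) ha

theorem IsComp.not_connected {A : Set α} (hA : IsComp H A) {v : α} (hv : v ∉ A) :
    ¬ H.Connected := by
  obtain ⟨K, rfl⟩ := hA
  intro hconn
  obtain ⟨a, ha⟩ := K.nonempty_supp
  rw [ConnectedComponent.mem_supp_iff] at ha
  exact hv (ha ▸ ConnectedComponent.sound (hconn v a))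

end Components

namespace IsCompOf

variable {V : Type*} {G : SimpleGraph V} {s C : Set V}

theorem subset (h : IsCompOf G s C) : C ⊆ s := by
  obtain ⟨K, rfl⟩ := h
  rintro _ ⟨w, _, rfl⟩
  exact w.2

theorem mem_of_adj (h : IsCompOf G s C) {u v : V} (hu : u ∈ C) (hv : v ∈ s) (huv : G.Adj u v) :
    v ∈ C := by
  obtain ⟨K, rfl⟩ := h
  obtain ⟨w, hw, rfl⟩ := hu
  exact ⟨⟨v, hv⟩, K.mem_supp_of_adj_mem_supp hw huv, rfl⟩

theorem connected_induce (h : IsCompOf G s C) : (G.induce C).Connected := by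
  obtain ⟨K, rfl⟩ := h
  let f : K.toSimpleGraph →g G.induce (Subtype.val '' K.supp) :=
    { toFun := fun w => ⟨w.1.1, w.1, w.2, rfl⟩
      map_rel' := id }
  refine K.connected_toSimpleGraph.map f ?_
  rintro ⟨_, w, hw, rfl⟩
  exact ⟨⟨w, hw⟩, rfl⟩

end IsCompOf

theorem timesK2_adj {V : Type*} {G : SimpleGraph V} {u v : V} {β γ : Bool} :
    (timesK2 G).Adj (u, β) (v, γ) ↔ G.Adj u v ∧ β ≠ γ :=
  Iff.rfl

section BPair

variable {V : Type*} {G : SimpleGraph V} {X Y P Q : Set V}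

def IsBipartition (G : SimpleGraph V) (P Q : Set V) : Prop :=
  Disjoint P Q ∧
    ∀ u w, u ∈ P ∪ Q → w ∈ P ∪ Q → G.Adj u w → (u ∈ P ∧ w ∈ Q) ∨ (u ∈ Q ∧ w ∈ P)

/-- The set `S' ∪ S''` of the statement. -/
def bPairCut (G : SimpleGraph V) (X Y P : Set V) : Set (V × Bool) :=
  ((X ∩ {x | ∃ p ∈ P, G.Adj x p}) ×ˢ {true})
    ∪ ((X ∩ {x | ¬ ∃ p ∈ P, G.Adj x p}) ×ˢ {false})
    ∪ (Y ×ˢ (univ : Set Bool))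

def sheet (P Q : Set V) : Set (V × Bool) :=
  (P ×ˢ {false}) ∪ (Q ×ˢ {true})

theorem mem_bPairCut {v : V} {γ : Bool} :
    (v, γ) ∈ bPairCut G X Y P ↔ v ∈ X ∧ ((∃ p ∈ P, G.Adj v p) ↔ γ = true) ∨ v ∈ Y := by
  cases γ <;> simp [bPairCut]

theorem mem_sheet {u : V} {β : Bool} :
    (u, β) ∈ sheet P Q ↔ u ∈ P ∧ β = false ∨ u ∈ Q ∧ β = true := by
  simp [sheet]

theorem mem_union_of_mem_sheet {u : V} {β : Bool} (h : (u, β) ∈ sheet P Q) : u ∈ P ∪ Q := by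
  rcases mem_sheet.mp h with h | h <;> simp [h.1]

theorem sheet_subset_compl_bPairCut (hC : P ∪ Q ⊆ (X ∪ Y)ᶜ) :
    sheet P Q ⊆ (bPairCut G X Y P)ᶜ := by
  rintro ⟨u, β⟩ hu
  have hu' : u ∉ X ∪ Y := hC (mem_union_of_mem_sheet hu)
  rw [mem_union, not_or] at hu'
  rw [mem_compl_iff, mem_bPairCut]
  tauto

namespace IsBipartition

open Classical in
noncomputable def sideColoring (h : IsBipartition G P Q) : (G.induce (P ∪ Q)).Coloring Bool :=
  Coloring.mk (fun u => decide (u.1 ∈ Q)) fun {u w} huw => by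
    rcases h.2 u w u.2 w.2 huw with ⟨hu, hw⟩ | ⟨hu, hw⟩
    · simp [hw, h.1.notMem_of_mem_left hu]
    · simp [hu, h.1.notMem_of_mem_left hw]

theorem mem_sheet_iff (h : IsBipartition G P Q) {u : V} (hu : u ∈ P ∪ Q) {β : Bool} :
    (u, β) ∈ sheet P Q ↔ h.sideColoring ⟨u, hu⟩ = β := by
  classical
  change _ ↔ decide (u ∈ Q) = β
  rw [mem_sheet]
  rcases hu with hp | hq
  · cases β <;> simp [hp, h.1.notMem_of_mem_left hp]
  · cases β <;> simp [hq, h.1.notMem_of_mem_right hq]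

theorem not_adj_both_sides (h : IsBipartition G P Q) (hconn : (G.induce (P ∪ Q)).Preconnected)
    {x p q : V} (hx : (G.induce (P ∪ Q ∪ {x})).Colorable 2) (hp : p ∈ P) (hq : q ∈ Q)
    (hxp : G.Adj x p) : ¬ G.Adj x q := by
  intro hxq
  obtain ⟨w⟩ := hconn ⟨p, Or.inl hp⟩ ⟨q, Or.inr hq⟩
  have hcp : h.sideColoring ⟨p, Or.inl hp⟩ = false :=
    (h.mem_sheet_iff _).mp (mem_sheet.mpr (Or.inl ⟨hp, rfl⟩))
  have hcq : h.sideColoring ⟨q, Or.inr hq⟩ = true :=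
    (h.mem_sheet_iff _).mp (mem_sheet.mpr (Or.inr ⟨hq, rfl⟩))
  have hodd : ¬ Even w.length := by
    rw [h.sideColoring.even_length_iff_congr w, hcp, hcq]
    simp
  refine hodd ?_
  rw [← w.length_map (induceHomOfLE G subset_union_left).toHom]
  exact Walk.even_length_of_adj_of_adj hx (x := ⟨x, Or.inr rfl⟩)
    (p := ⟨p, Or.inl (Or.inl hp)⟩) (q := ⟨q, Or.inl (Or.inr hq)⟩) hxp hxq _

theorem connected_induce_sheet (h : IsBipartition G P Q) (hconn : (G.induce (P ∪ Q)).Connected) :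
    ((timesK2 G).induce (sheet P Q)).Connected := by
  let f : G.induce (P ∪ Q) →g (timesK2 G).induce (sheet P Q) :=
    { toFun := fun u => ⟨(u.1, h.sideColoring u), (h.mem_sheet_iff u.2).mpr rfl⟩
      map_rel' := fun huv => ⟨huv, h.sideColoring.valid huv⟩ }
  refine hconn.map f ?_
  rintro ⟨⟨u, β⟩, hu⟩
  have hu' := mem_union_of_mem_sheet hu
  exact ⟨⟨u, hu'⟩, Subtype.ext (Prod.ext rfl ((h.mem_sheet_iff hu').mp hu))⟩

theorem mem_sheet_of_adj (h : IsBipartition G P Q) (hcomp : IsCompOf G (X ∪ Y)ᶜ (P ∪ Q))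
    (hX : ∀ x ∈ X, (G.induce (P ∪ Q ∪ {x})).Colorable 2) {u v : V} {β γ : Bool}
    (hu : (u, β) ∈ sheet P Q) (hv : (v, γ) ∉ bPairCut G X Y P)
    (huv : (timesK2 G).Adj (u, β) (v, γ)) : (v, γ) ∈ sheet P Q := by
  obtain ⟨hG, hβγ⟩ := timesK2_adj.mp huv
  have huC := mem_union_of_mem_sheet hu
  by_cases hvXY : v ∈ (X ∪ Y)ᶜ
  · have hvC := hcomp.mem_of_adj huC hvXY hG
    have hc : h.sideColoring ⟨u, huC⟩ ≠ h.sideColoring ⟨v, hvC⟩ := h.sideColoring.valid hG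
    rw [h.mem_sheet_iff huC] at hu
    rw [h.mem_sheet_iff hvC, Bool.eq_not_of_ne hc.symm, hu, Bool.eq_not_of_ne hβγ.symm]
  rw [mem_bPairCut] at hv
  have hvX : v ∈ X := ((not_not.mp hvXY).resolve_right fun hY => hv (Or.inr hY))
  exfalso
  rcases mem_sheet.mp hu with ⟨hup, rfl⟩ | ⟨huq, rfl⟩
  · exact hv (Or.inl ⟨hvX, iff_of_true ⟨u, hup, hG.symm⟩ (by simpa using hβγ.symm)⟩)
  · refine hv (Or.inl ⟨hvX, iff_of_false ?_ (by simpa using hβγ)⟩)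
    rintro ⟨p, hp, hvp⟩
    exact h.not_adj_both_sides hcomp.connected_induce.preconnected (hX v hvX) hp huq hvp hG.symm

end IsBipartition

end BPair

theorem ncard_split_prod_bool {V : Type*} {X Y N : Set V} (hX : X.Finite) (hY : Y.Finite)
    (hXY : Disjoint X Y) :
    ((X ∩ N) ×ˢ {true} ∪ (X ∩ Nᶜ) ×ˢ {false} ∪ Y ×ˢ (univ : Set Bool)).ncard =
      X.ncard + 2 * Y.ncard := by
  have hXN : Disjoint ((X ∩ N) ×ˢ ({true} : Set Bool)) ((X ∩ Nᶜ) ×ˢ {false}) :=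
    disjoint_prod.mpr (Or.inr (by simp))
  have hXY' : Disjoint ((X ∩ N) ×ˢ ({true} : Set Bool) ∪ (X ∩ Nᶜ) ×ˢ {false}) (Y ×ˢ univ) :=
    disjoint_union_left.mpr ⟨disjoint_prod.mpr (Or.inl (hXY.mono_left inter_subset_left)),
      disjoint_prod.mpr (Or.inl (hXY.mono_left inter_subset_left))⟩
  rw [ncard_union_eq hXY' ((hX.inter_of_left _).prod (toFinite _) |>.union
      ((hX.inter_of_left _).prod (toFinite _))) (hY.prod (toFinite _)),
    ncard_union_eq hXN ((hX.inter_of_left _).prod (toFinite _))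
      ((hX.inter_of_left _).prod (toFinite _)),
    ncard_prod, ncard_prod, ncard_prod, ncard_singleton, ncard_singleton, ncard_univ,
    Nat.card_eq_fintype_card, Fintype.card_bool, mul_one, mul_one, ← sdiff_eq,
    ncard_inter_add_ncard_sdiff_eq_ncard X N hX, mul_comm]

/-- Let `(X, Y)` be a b-pair of `G` witnessed by a bipartite component `C = P ∪ Q` of
`G − (X ∪ Y)`.  With `S' = {(x,b) : x ∈ X has a neighbor in P} ∪ {(x,a) : x ∈ X has no
neighbor in P}` and `S'' = Y × {a,b}`, the component `C₁` of `C × K₂` with bipartition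
`(P × {a}, Q × {b})` is a connected component of `G × K₂ − (S' ∪ S'')`; in particular,
if `G × K₂ − (S' ∪ S'')` has another vertex, then `S' ∪ S''` is a separating set of
`G × K₂` of size `|X| + 2|Y|`.  (Here `a = false`, `b = true`.) -/
theorem stmt_19 {V : Type u} [Fintype V] (G : SimpleGraph V) (X Y P Q : Set V)
    (hXY : Disjoint X Y) (hPQ : Disjoint P Q)
    (hcomp : IsCompOf G ((X ∪ Y)ᶜ) (P ∪ Q))
    (hbip : ∀ u w, u ∈ P ∪ Q → w ∈ P ∪ Q → G.Adj u w →
      (u ∈ P ∧ w ∈ Q) ∨ (u ∈ Q ∧ w ∈ P))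
    (hX : ∀ x ∈ X, (G.induce ((P ∪ Q) ∪ {x})).Colorable 2) :
    IsComp ((timesK2 G).induce
        ((((X ∩ {x | ∃ p ∈ P, G.Adj x p}) ×ˢ {true})
          ∪ ((X ∩ {x | ¬ ∃ p ∈ P, G.Adj x p}) ×ˢ {false})
          ∪ (Y ×ˢ (Set.univ : Set Bool)))ᶜ))
      (Subtype.val ⁻¹' ((P ×ˢ {false}) ∪ (Q ×ˢ {true}))) ∧
    ((∃ p : V × Bool,
        p ∉ ((X ∩ {x | ∃ p ∈ P, G.Adj x p}) ×ˢ {true})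
          ∪ ((X ∩ {x | ¬ ∃ p ∈ P, G.Adj x p}) ×ˢ {false})
          ∪ (Y ×ˢ (Set.univ : Set Bool)) ∧
        p ∉ (P ×ˢ {false}) ∪ (Q ×ˢ {true})) →
      IsSeparating (timesK2 G)
        (((X ∩ {x | ∃ p ∈ P, G.Adj x p}) ×ˢ {true})
          ∪ ((X ∩ {x | ¬ ∃ p ∈ P, G.Adj x p}) ×ˢ {false})
          ∪ (Y ×ˢ (Set.univ : Set Bool))) ∧
      (((X ∩ {x | ∃ p ∈ P, G.Adj x p}) ×ˢ ({true} : Set Bool))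
          ∪ ((X ∩ {x | ¬ ∃ p ∈ P, G.Adj x p}) ×ˢ {false})
          ∪ (Y ×ˢ (Set.univ : Set Bool))).ncard = X.ncard + 2 * Y.ncard) := by
  have hPQbip : IsBipartition G P Q := ⟨hPQ, hbip⟩
  have hsheet : IsComp ((timesK2 G).induce (bPairCut G X Y P)ᶜ) (Subtype.val ⁻¹' sheet P Q) :=
    isComp_induce_of_connected (sheet_subset_compl_bPairCut hcomp.subset)
      (hPQbip.connected_induce_sheet hcomp.connected_induce)
      fun _ _ hu hv huv => hPQbip.mem_sheet_of_adj hcomp hX hu hv huv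
  refine ⟨hsheet, fun ⟨p, hpS, hpC⟩ => ⟨?_, ncard_split_prod_bool (toFinite X) (toFinite Y) hXY⟩⟩
  exact Or.inl (hsheet.not_connected (v := ⟨p, hpS⟩) hpC)
end
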